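/- arXiv:1210.3403 — 2 statements merged into one kernel-verified Lean document; each statement's English description precedes it below -/
import Mathlib

section
/- Let u ∈ L²(Q_ρ(z₀);ℝ^d) and θ ∈ (0,1]. Denote by Q_{z₀,ρ}^{(2)} and Q_{z₀,θρ}^{(2)} the linear parts of the unique minimizers l_ρ^{(2)} and l_{θρ}^{(2)} of l ↦ ⨍_{Q_r(z₀)} |u−l|² over affine time-independent l, for r = ρ and r = θρ respectively. Then |Q_{z₀,θρ}^{(2)} − Q_{z₀,ρ}^{(2)}|² ≤ (d(d+2)/(θρ)²)·⨍_{Q_{θρ}(z₀)} |u − l_ρ^{(2)}|². -/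
open MeasureTheory Metric Set Filter

noncomputable section

/-- `Vec d` is Euclidean `ℝ^d`. -/
abbrev Vec (d : ℕ) := EuclideanSpace ℝ (Fin d)

/-- `Mat d` is the space of `d × d` real matrices (tensors `ℝ^{d×d}`). -/
abbrev Mat (d : ℕ) := Fin d → Fin d → ℝ

/-- Frobenius norm of a matrix. -/
def mnorm {d : ℕ} (M : Mat d) : ℝ := Real.sqrt (∑ i, ∑ j, (M i j) ^ 2)

/-- Double-dot contraction `M : N`. -/
def mdot {d : ℕ} (M N : Mat d) : ℝ := ∑ i, ∑ j, M i j * N i j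

/-- Symmetric part `ξˢ = (ξ + ξᵀ)/2`. -/
def symPart {d : ℕ} (M : Mat d) : Mat d := fun i j => (M i j + M j i) / 2

/-- Euclidean dot product. -/
def vdot {d : ℕ} (u v : Vec d) : ℝ := ∑ i, u i * v i

/-- Spatial gradient of `u(x,t)`, `(∇u)_{ij} = ∂ u^i / ∂ x_j`. -/
def sgrad {d : ℕ} (u : Vec d → ℝ → Vec d) (x : Vec d) (t : ℝ) : Mat d :=
  fun i j => fderiv ℝ (fun y => u y t) x (EuclideanSpace.single j 1) i

/-- Symmetric gradient `𝔻u = (∇u + ∇ᵀu)/2`. -/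
def Dsym {d : ℕ} (u : Vec d → ℝ → Vec d) (x : Vec d) (t : ℝ) : Mat d :=
  symPart (sgrad u x t)

/-- Time derivative `∂_t u`. -/
def tder {d : ℕ} (u : Vec d → ℝ → Vec d) (x : Vec d) (t : ℝ) : Vec d :=
  deriv (fun s => u x s) t

/-- `m`-th time derivative `∂_t^m u`. -/
def tderN {d : ℕ} (m : ℕ) (u : Vec d → ℝ → Vec d) (x : Vec d) (t : ℝ) : Vec d :=
  iteratedDeriv m (fun s => u x s) t

/-- Parabolic cylinder `Q_ρ(z₀) = B_ρ(x₀) × (t₀ - ρ², t₀)`. -/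
def pcyl {d : ℕ} (x₀ : Vec d) (t₀ ρ : ℝ) : Set (Vec d × ℝ) :=
  (ball x₀ ρ) ×ˢ (Ioo (t₀ - ρ ^ 2) t₀)

/-- Test function: smooth with compact support contained in `Q`. -/
def IsTest {d : ℕ} (Q : Set (Vec d × ℝ)) (φ : Vec d → ℝ → Vec d) : Prop :=
  ContDiff ℝ (⊤ : ℕ∞) (fun p : Vec d × ℝ => φ p.1 p.2) ∧
  HasCompactSupport (fun p : Vec d × ℝ => φ p.1 p.2) ∧
  tsupport (fun p : Vec d × ℝ => φ p.1 p.2) ⊆ Q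

/-- Weak solution of `u_t - div A(z, u, 𝔻u) = 0` on `Q`. -/
def IsWeakSolution {d : ℕ} (Q : Set (Vec d × ℝ))
    (A : (Vec d × ℝ) → Vec d → Mat d → Mat d)
    (u : Vec d → ℝ → Vec d) : Prop :=
  ∀ φ : Vec d → ℝ → Vec d, IsTest Q φ →
    ∫ z in Q, (vdot (u z.1 z.2) (tder φ z.1 z.2)
      - mdot (A z (u z.1 z.2) (Dsym u z.1 z.2)) (Dsym φ z.1 z.2)) = 0

/-- Parabolic metric `d₂(z - z̃) = |x - x̃| + |t - t̃|^{1/2}`. -/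
def pdist {d : ℕ} (z w : Vec d × ℝ) : ℝ := ‖z.1 - w.1‖ + |z.2 - w.2| ^ ((1 : ℝ) / 2)

/-- `∂A/∂q (z,u,q)` applied to a direction `ξ`. -/
def DA {d : ℕ} (A : (Vec d × ℝ) → Vec d → Mat d → Mat d)
    (z : Vec d × ℝ) (u : Vec d) (q ξ : Mat d) : Mat d :=
  fderiv ℝ (A z u) q ξ

/-- Basis tensor `e_{kl}`. -/
def tbasis {d : ℕ} (k l : Fin d) : Mat d := fun k' l' => if k' = k ∧ l' = l then 1 else 0

/-- Coefficients `(∂A/∂q)^{ij}_{kl}`. -/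
def DAc {d : ℕ} (A : (Vec d × ℝ) → Vec d → Mat d → Mat d)
    (z : Vec d × ℝ) (u : Vec d) (q : Mat d) (i j k l : Fin d) : ℝ :=
  DA A z u q (tbasis k l) i j

/-- Frobenius norm of a fourth order tensor. -/
def qnorm {d : ℕ} (c : Fin d → Fin d → Fin d → Fin d → ℝ) : ℝ :=
  Real.sqrt (∑ i, ∑ j, ∑ k, ∑ l, (c i j k l) ^ 2)

/-- (2.1) strong ellipticity `A(z,u,ξˢ) : ξˢ ≥ λ |ξˢ|^p`. -/
def Cond21 {d : ℕ} (p lam : ℝ) (A : (Vec d × ℝ) → Vec d → Mat d → Mat d) : Prop :=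
  ∀ z u (ξ : Mat d), lam * mnorm (symPart ξ) ^ p ≤ mdot (A z u (symPart ξ)) (symPart ξ)

/-- (2.2) weakly symmetrizing `A(z,u,ξˢ) : η = A(z,u,ξˢ) : ηˢ`. -/
def Cond22 {d : ℕ} (A : (Vec d × ℝ) → Vec d → Mat d → Mat d) : Prop :=
  ∀ z u (ξ η : Mat d), mdot (A z u (symPart ξ)) η = mdot (A z u (symPart ξ)) (symPart η)

/-- (2.3) growth of order `p - 1`. -/
def Cond23 {d : ℕ} (p C : ℝ) (A : (Vec d × ℝ) → Vec d → Mat d → Mat d) : Prop :=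
  ∀ z u q, mnorm (A z u q) ≤ C * (1 + mnorm q ^ (p - 1))

/-- (2.4) Hölder continuity in `(z,u)`. -/
def Cond24 {d : ℕ} (p C β : ℝ) (K : ℝ → ℝ)
    (A : (Vec d × ℝ) → Vec d → Mat d → Mat d) : Prop :=
  Monotone K ∧ (∀ s, 1 ≤ K s) ∧
  ∀ z w u v q, mnorm (A z u q - A w v q) ≤
    C * min 1 (K (‖u‖ + ‖v‖)) * (pdist z w + ‖u - v‖) ^ β * (1 + mnorm q ^ (p - 1))

/-- (2.5) Legendre–Hadamard type ellipticity of `∂A/∂q`. -/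
def Cond25 {d : ℕ} (p lam : ℝ) (A : (Vec d × ℝ) → Vec d → Mat d → Mat d) : Prop :=
  ∀ z u q (ξ : Mat d),
    lam * (1 + mnorm q ^ 2) ^ ((p - 2) / 2) * mnorm (symPart ξ) ^ 2 ≤
      mdot (DA A z u q (symPart ξ)) (symPart ξ)

/-- (2.6) strong symmetry of the coefficients of `∂A/∂q`. -/
def Cond26 {d : ℕ} (A : (Vec d × ℝ) → Vec d → Mat d → Mat d) : Prop :=
  ∀ z u q (i j k l : Fin d),
    DAc A z u q i j k l = DAc A z u q k l i j ∧
    DAc A z u q i j k l = DAc A z u q j i l k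

/-- (2.7) local boundedness of `∂A/∂q`. -/
def Cond27 {d : ℕ} (CM : ℝ → ℝ) (A : (Vec d × ℝ) → Vec d → Mat d → Mat d) : Prop :=
  ∀ z u q M, ‖u‖ + mnorm q ≤ M → qnorm (DAc A z u q) ≤ CM M

/-- Modulus of continuity `ω` of (2.8). -/
def ModulusOK (p : ℝ) (ω : ℝ → ℝ → ℝ) : Prop :=
  (∀ s, Monotone fun t => ω t s) ∧ (∀ t, Monotone (ω t)) ∧ (∀ t, ω t 0 = 0) ∧
  (∀ t, ContinuousAt (ω t) 0) ∧ (∀ t, ConcaveOn ℝ (Ici 0) fun s => (ω t s) ^ p) ∧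
  (∀ t s, 0 ≤ ω t s)

/-- (2.8) continuity of `∂A/∂q`. -/
def Cond28 {d : ℕ} (p : ℝ) (CM : ℝ → ℝ) (ω : ℝ → ℝ → ℝ)
    (A : (Vec d × ℝ) → Vec d → Mat d → Mat d) : Prop :=
  ∀ z w u v q r M, ‖u‖ + mnorm q + ‖u - v‖ + mnorm (q - r) ≤ M →
    qnorm (fun i j k l => DAc A z u q i j k l - DAc A w v r i j k l) ≤
      CM M * ω M ((pdist z w) ^ 2 + ‖u - v‖ ^ p + mnorm (q - r) ^ p)

/-- Membership in `C(-T,0;L²(Ω))`. -/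
def InCL2 {d : ℕ} (Ω : Set (Vec d)) (T : ℝ) (u : Vec d → ℝ → Vec d) : Prop :=
  (∀ t ∈ Ioo (-T) (0 : ℝ), MemLp (fun x => u x t) 2 (volume.restrict Ω)) ∧
  ∀ t₀ ∈ Ioo (-T) (0 : ℝ),
    Tendsto (fun t => ∫ x in Ω, ‖u x t - u x t₀‖ ^ 2) (nhds t₀) (nhds 0)

/-- Membership in `L^p(-T,0;W^{1,p}(Ω))`. -/
def InLpW1p {d : ℕ} (Ω : Set (Vec d)) (T p : ℝ) (u : Vec d → ℝ → Vec d) : Prop :=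
  (∀ t ∈ Ioo (-T) (0 : ℝ), DifferentiableOn ℝ (fun x => u x t) Ω) ∧
  IntegrableOn (fun z : Vec d × ℝ => ‖u z.1 z.2‖ ^ p + (mnorm (sgrad u z.1 z.2)) ^ p)
    (Ω ×ˢ Ioo (-T) 0)

/-- The time independent affine function `l(x) = b + L (x - x₀)`. -/
def aff {d : ℕ} (x₀ b : Vec d) (L : Mat d) (x : Vec d) : Vec d :=
  b + (EuclideanSpace.equiv (Fin d) ℝ).symm (fun i => ∑ j, L i j * (x j - x₀ j))

/-- Average of `u` over a set of space-time points. -/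
def vavg {d : ℕ} (s : Set (Vec d × ℝ)) (u : Vec d → ℝ → Vec d) : Vec d :=
  ⨍ z in s, u z.1 z.2

/-- Average of `∇u` over a set of space-time points. -/
def gavg {d : ℕ} (s : Set (Vec d × ℝ)) (u : Vec d → ℝ → Vec d) : Mat d :=
  ⨍ z in s, sgrad u z.1 z.2

/-- Average of `𝔻u` over a set of space-time points. -/
def davg {d : ℕ} (s : Set (Vec d × ℝ)) (u : Vec d → ℝ → Vec d) : Mat d :=
  ⨍ z in s, Dsym u z.1 z.2

/-- Excess `ψ_{s,z₀,l}(ρ) = ⨍_{Q_ρ(z₀)} |(u-l)/ρ|^s`. -/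
def psiS {d : ℕ} (s : ℝ) (u : Vec d → ℝ → Vec d) (x₀ : Vec d) (t₀ ρ : ℝ)
    (b : Vec d) (L : Mat d) : ℝ :=
  ⨍ z in pcyl x₀ t₀ ρ, (‖u z.1 z.2 - aff x₀ b L z.1‖ / ρ) ^ s

/-- Excess `φ_{s,z₀,l}(ρ) = ⨍_{Q_ρ(z₀)} |𝔻u - 𝔻l|^s`. -/
def phiS {d : ℕ} (s : ℝ) (u : Vec d → ℝ → Vec d) (x₀ : Vec d) (t₀ ρ : ℝ)
    (L : Mat d) : ℝ :=
  ⨍ z in pcyl x₀ t₀ ρ, (mnorm (Dsym u z.1 z.2 - symPart L)) ^ s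

/-- The `L² - L^p` excess energy `E_{z₀,l}(ρ)`. -/
def Eexc {d : ℕ} (p : ℝ) (u : Vec d → ℝ → Vec d) (x₀ : Vec d) (t₀ ρ : ℝ)
    (b : Vec d) (L : Mat d) : ℝ :=
  psiS 2 u x₀ t₀ ρ b L + psiS p u x₀ t₀ ρ b L

/-- The perturbed excess energy `Ẽ_{z₀,l}(ρ) = E_{z₀,l}(ρ) + ρ^{2β}`. -/
def EexcT {d : ℕ} (p β : ℝ) (u : Vec d → ℝ → Vec d) (x₀ : Vec d) (t₀ ρ : ℝ)
    (b : Vec d) (L : Mat d) : ℝ :=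
  Eexc p u x₀ t₀ ρ b L + ρ ^ (2 * β)

/-- `(b, L)` parametrizes the minimizer of `l ↦ ⨍_{Q_ρ(z₀)} |u - l|^s` over
time-independent affine functions `l`. -/
def IsLsMin {d : ℕ} (s : ℝ) (u : Vec d → ℝ → Vec d) (x₀ : Vec d) (t₀ ρ : ℝ)
    (b : Vec d) (L : Mat d) : Prop :=
  ∀ b' L', (⨍ z in pcyl x₀ t₀ ρ, ‖u z.1 z.2 - aff x₀ b L z.1‖ ^ s) ≤
    ⨍ z in pcyl x₀ t₀ ρ, ‖u z.1 z.2 - aff x₀ b' L' z.1‖ ^ s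

/-- A point `z` is regular: vanishing liminf of the gradient excess and bounded means. -/
def RegularPoint {d : ℕ} (p : ℝ) (u : Vec d → ℝ → Vec d) (z : Vec d × ℝ) : Prop :=
  (∀ ε > (0 : ℝ), ∀ ρ₀ > (0 : ℝ), ∃ ρ ∈ Ioo (0 : ℝ) ρ₀,
    (⨍ w in pcyl z.1 z.2 ρ, (mnorm (sgrad u w.1 w.2 - gavg (pcyl z.1 z.2 ρ) u)) ^ p) < ε) ∧
  (∃ M ρ₀ : ℝ, 0 < ρ₀ ∧ ∀ ρ ∈ Ioo (0 : ℝ) ρ₀,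
    ‖vavg (pcyl z.1 z.2 ρ) u‖ + mnorm (gavg (pcyl z.1 z.2 ρ) u) ≤ M)



/-! ### Auxiliary lemmas for `linear_part_shrink` -/

open scoped RealInnerProductSpace

namespace LPSaux

lemma inner_eq_sum {d : ℕ} (v w : Vec d) : ⟪v, w⟫ = ∑ i, v i * w i := by
  simp [PiLp.inner_apply, RCLike.inner_apply, conj_trivial, mul_comm]

lemma norm_sq_eq {d : ℕ} (x : Vec d) : ‖x‖^2 = ∑ i, (x i)^2 := by
  rw [EuclideanSpace.norm_eq, Real.sq_sqrt (by positivity)]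
  simp [Real.norm_eq_abs, sq_abs]

lemma continuous_aff {d : ℕ} (x₀ b : Vec d) (L : Mat d) : Continuous (aff x₀ b L) := by
  unfold aff
  refine continuous_const.add ?_
  refine ((EuclideanSpace.equiv (Fin d) ℝ).symm.continuous.comp ?_)
  refine continuous_pi fun i => ?_
  refine continuous_finset_sum _ fun j _ => ?_
  exact continuous_const.mul (((continuous_apply j).comp
    (EuclideanSpace.equiv (Fin d) ℝ).continuous).sub continuous_const)

lemma aff_lin {d : ℕ} (x₀ a a' : Vec d) (P P' : Mat d) (s : ℝ) (x : Vec d) :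
    aff x₀ (a + s • a') (P + s • P') x = aff x₀ a P x + s • aff x₀ a' P' x := by
  ext i
  show (a i + s * a' i) + ∑ j, (P i j + s * P' i j) * (x j - x₀ j)
      = (a i + ∑ j, P i j * (x j - x₀ j)) + s * (a' i + ∑ j, P' i j * (x j - x₀ j))
  have h : ∑ j, (P i j + s * P' i j) * (x j - x₀ j)
      = (∑ j, P i j * (x j - x₀ j)) + s * ∑ j, P' i j * (x j - x₀ j) := by
    rw [Finset.mul_sum, ← Finset.sum_add_distrib]
    exact Finset.sum_congr rfl fun j _ => by ring
  rw [h]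
  ring

lemma aff_add {d : ℕ} (x₀ a a' : Vec d) (P P' : Mat d) (x : Vec d) :
    aff x₀ a P x + aff x₀ a' P' x = aff x₀ (a + a') (P + P') x := by
  have := aff_lin x₀ a a' P P' 1 x
  simp only [one_smul] at this
  rw [this]

lemma ortho_aux {α : Type*} [MeasurableSpace α] (μ : Measure α) {E : Type*}
    [NormedAddCommGroup E] [InnerProductSpace ℝ E] (f g : α → E)
    (hf : MemLp f 2 μ) (hg : MemLp g 2 μ)
    (hmin : ∀ s : ℝ, (∫ a, ‖f a‖^2 ∂μ) ≤ ∫ a, ‖f a - s • g a‖^2 ∂μ) :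
    ∫ a, ‖g a‖^2 ∂μ ≤ ∫ a, ‖f a - g a‖^2 ∂μ := by
  have hinner : ∀ (f' g' : α → E), MemLp f' 2 μ → MemLp g' 2 μ →
      Integrable (fun a => ⟪f' a, g' a⟫) μ := by
    intro f' g' hf' hg'
    have h := L2.integrable_inner (𝕜 := ℝ) (hf'.toLp f') (hg'.toLp g')
    apply h.congr
    filter_upwards [hf'.coeFn_toLp, hg'.coeFn_toLp] with a ha hb
    rw [ha, hb]
  have hXint := hinner f g hf hg
  have hFint : Integrable (fun a => ‖f a‖^2) μ := by
    have := hinner f f hf hf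
    apply this.congr
    exact Filter.Eventually.of_forall fun a => real_inner_self_eq_norm_sq (f a)
  have hYint : Integrable (fun a => ‖g a‖^2) μ := by
    have := hinner g g hg hg
    apply this.congr
    exact Filter.Eventually.of_forall fun a => real_inner_self_eq_norm_sq (g a)
  set X := ∫ a, ⟪f a, g a⟫ ∂μ with hX
  set Y := ∫ a, ‖g a‖^2 ∂μ with hY
  set F := ∫ a, ‖f a‖^2 ∂μ with hF
  have hexp : ∀ s : ℝ, ∫ a, ‖f a - s • g a‖^2 ∂μ = F + (s^2 * Y - (2*s) * X) := by
    intro s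
    have hpt : ∀ a, ‖f a - s • g a‖^2
        = ‖f a‖^2 + (s^2 * ‖g a‖^2 - (2*s) * ⟪f a, g a⟫) := by
      intro a
      rw [norm_sub_sq_real, real_inner_smul_right, norm_smul, Real.norm_eq_abs, mul_pow, sq_abs]
      ring
    simp_rw [hpt]
    have h1 : Integrable (fun a => s ^ 2 * ‖g a‖ ^ 2 - 2 * s * ⟪f a, g a⟫) μ :=
      (hYint.const_mul _).sub (hXint.const_mul _)
    rw [integral_add hFint h1, integral_sub (hYint.const_mul _) (hXint.const_mul _),
      MeasureTheory.integral_const_mul, MeasureTheory.integral_const_mul]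
  have hY0 : 0 ≤ Y := integral_nonneg fun a => sq_nonneg _
  have hF0 : 0 ≤ F := integral_nonneg fun a => sq_nonneg _
  have hX0 : X = 0 := by
    have h := hmin (X / (Y + 1))
    rw [hexp] at h
    have hY1 : (0:ℝ) < Y + 1 := by linarith
    have hq : X = (X/(Y+1))*(Y+1) := by field_simp
    set q := X/(Y+1) with hqdef
    have h2 : 0 ≤ q^2 * Y - (2*q) * X := by linarith
    rw [hq] at h2 ⊢
    have hq2 : q^2 ≤ 0 := by nlinarith [sq_nonneg q]
    have hq0 : q = 0 := pow_eq_zero_iff (two_ne_zero) |>.mp (le_antisymm hq2 (sq_nonneg q))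
    rw [hq0]; ring
  have hfin : ∫ a, ‖f a - g a‖^2 ∂μ = F + (1^2 * Y - (2*1) * X) := by
    have := hexp 1
    simpa using this
  rw [hfin, hX0]
  nlinarith [hF0]

lemma integrableOn_ball_of_continuous {d : ℕ} {f : Vec d → ℝ} (hf : Continuous f)
    (x : Vec d) (r : ℝ) : IntegrableOn f (ball x r) := by
  exact (hf.continuousOn.integrableOn_compact (isCompact_closedBall x r)).mono_set
    ball_subset_closedBall

lemma ball_inner_zero {d : ℕ} (r : ℝ) (w : Vec d) :
    ∫ y in ball (0 : Vec d) r, ⟪w, y⟫ = 0 := by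
  have e : MeasurePreserving (fun y : Vec d => -y) volume volume :=
    (LinearIsometryEquiv.neg ℝ (E := Vec d)).measurePreserving
  have emb : MeasurableEmbedding (fun y : Vec d => -y) :=
    (Homeomorph.neg (Vec d)).measurableEmbedding
  have h := e.setIntegral_preimage_emb emb (fun y => ⟪w, y⟫) (ball (0 : Vec d) r)
  have hpre : (fun y : Vec d => -y) ⁻¹' ball (0 : Vec d) r = ball (0 : Vec d) r := by
    ext y; simp [mem_ball, dist_zero_right]
  rw [hpre] at h
  have h2 : ∫ y in ball (0 : Vec d) r, ⟪w, -y⟫ = - ∫ y in ball (0 : Vec d) r, ⟪w, y⟫ := by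
    simp_rw [inner_neg_right]
    exact integral_neg _
  rw [h2] at h
  linarith

lemma ball_inner_sq {d : ℕ} (hd : 0 < d) (r : ℝ) (v : Vec d) :
    ∫ y in ball (0 : Vec d) r, ⟪v, y⟫ ^ 2
      = ‖v‖^2 * ∫ y in ball (0 : Vec d) r, (y ⟨0, hd⟩)^2 := by
  set i₀ : Fin d := ⟨0, hd⟩
  have unit : ∀ v : Vec d, ‖v‖ = 1 →
      ∫ y in ball (0 : Vec d) r, ⟪v, y⟫ ^ 2 = ∫ y in ball (0 : Vec d) r, (y i₀)^2 := by
    intro v hv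
    have horth : Orthonormal ℝ (({i₀} : Set (Fin d)).restrict (fun _ : Fin d => v)) := by
      constructor
      · intro i; exact hv
      · intro i j hij
        exact absurd (Subtype.ext ((i.2 : i.1 ∈ ({i₀} : Set (Fin d))).trans
          (j.2 : j.1 ∈ ({i₀} : Set (Fin d))).symm)) hij
    obtain ⟨b, hb⟩ := horth.exists_orthonormalBasis_extension_of_card_eq
      (by simp [finrank_euclideanSpace_fin])
    have hbv : b i₀ = v := hb i₀ rfl
    have hrepr : ∀ y : Vec d, ⟪v, y⟫ = b.repr y i₀ := by
      intro y; rw [b.repr_apply_apply, hbv]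
    simp_rw [hrepr]
    have e : MeasurePreserving (⇑b.repr) volume volume :=
      (b.repr : Vec d ≃ₗᵢ[ℝ] EuclideanSpace ℝ (Fin d)).measurePreserving
    have emb : MeasurableEmbedding (⇑b.repr) :=
      (b.repr : Vec d ≃ₗᵢ[ℝ] EuclideanSpace ℝ (Fin d)).toHomeomorph.measurableEmbedding
    have h := e.setIntegral_preimage_emb emb (fun w : EuclideanSpace ℝ (Fin d) => (w i₀)^2)
      (ball (0 : Vec d) r)
    have hpre : (⇑b.repr) ⁻¹' ball (0 : Vec d) r = ball (0 : Vec d) r := by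
      ext y
      simp only [mem_preimage, mem_ball, dist_zero_right]
      rw [b.repr.norm_map]
    rw [hpre] at h
    exact h
  rcases eq_or_ne v 0 with rfl | hv
  · simp
  · have hnv : ‖v‖ ≠ 0 := norm_ne_zero_iff.mpr hv
    set u : Vec d := ‖v‖⁻¹ • v with hu
    have hu1 : ‖u‖ = 1 := norm_smul_inv_norm hv
    have hvu : ∀ y : Vec d, ⟪v, y⟫ = ‖v‖ * ⟪u, y⟫ := by
      intro y
      rw [hu, real_inner_smul_left]
      field_simp
    simp_rw [hvu, mul_pow]
    rw [MeasureTheory.integral_const_mul, unit u hu1]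

lemma ball_norm_sq_int {d : ℕ} (hd : 0 < d) {r : ℝ} (hr : 0 < r) :
    ∫ y in ball (0 : Vec d) r, ‖y‖^2
      = (d : ℝ) * (volume (ball (0 : Vec d) 1)).toReal * (r^(d+2)/(d+2)) := by
  haveI : Nonempty (Fin d) := ⟨⟨0, hd⟩⟩
  haveI : Nontrivial (Vec d) := by
    refine nontrivial_of_ne (EuclideanSpace.single ⟨0, hd⟩ (1:ℝ)) 0 fun h => ?_
    have := congrArg norm h
    rw [EuclideanSpace.norm_single, norm_zero] at this
    simp at this
  set f : ℝ → ℝ := fun t => if t < r then t^2 else 0 with hf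
  have step1 : ∫ y in ball (0 : Vec d) r, ‖y‖^2 = ∫ y : Vec d, f ‖y‖ := by
    rw [← integral_indicator measurableSet_ball]
    congr 1
    funext y
    by_cases hy : y ∈ ball (0 : Vec d) r
    · rw [indicator_of_mem hy]
      simp only [hf]
      rw [if_pos (by simpa [mem_ball, dist_zero_right] using hy)]
    · rw [indicator_of_notMem hy]
      simp only [hf]
      rw [if_neg (by simpa [mem_ball, dist_zero_right] using hy)]
  rw [step1, integral_fun_norm_addHaar volume f]
  have hrank : Module.finrank ℝ (Vec d) = d := finrank_euclideanSpace_fin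
  rw [hrank]
  have step2 : ∫ t in Ioi (0:ℝ), t ^ (d - 1) • f t = r^(d+2)/(d+2) := by
    have hind : ∀ t : ℝ, t ^ (d-1) • f t = (Iio r).indicator (fun t => t^(d-1) * t^2) t := by
      intro t
      by_cases ht : t < r
      · rw [indicator_of_mem (by simpa using ht)]
        simp [hf, if_pos ht]
      · rw [indicator_of_notMem (by simpa using ht)]
        simp [hf, if_neg ht]
    simp_rw [hind]
    rw [setIntegral_indicator measurableSet_Iio]
    have hIoo : Ioi (0:ℝ) ∩ Iio r = Ioo 0 r := Ioi_inter_Iio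
    rw [hIoo]
    have hpow : ∀ t : ℝ, t^(d-1) * t^2 = t^(d+1) := by
      intro t; rw [← pow_add]; congr 1; omega
    simp_rw [hpow]
    rw [← MeasureTheory.integral_Ioc_eq_integral_Ioo,
      ← intervalIntegral.integral_of_le hr.le, integral_pow]
    rw [zero_pow (by omega : d + 1 + 1 ≠ 0)]
    push_cast
    ring_nf
  rw [step2]
  rw [nsmul_eq_mul, smul_eq_mul]
  simp only [measureReal_def]
  ring

end LPSaux

set_option maxHeartbeats 2000000 in
/-- shrinking of the linear parts of `L²` minimizers (Lemma 4.2, (4.4)). -/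
theorem linear_part_shrink
    {d : ℕ} (x₀ : Vec d) (t₀ ρ θ : ℝ) (hρ : 0 < ρ) (hθ : θ ∈ Ioc (0 : ℝ) 1)
    (u : Vec d → ℝ → Vec d)
    (hu : MemLp (fun z : Vec d × ℝ => u z.1 z.2) 2 (volume.restrict (pcyl x₀ t₀ ρ)))
    (b₁ b₂ : Vec d) (L₁ L₂ : Mat d)
    (h₁ : IsLsMin 2 u x₀ t₀ ρ b₁ L₁)
    (h₂ : IsLsMin 2 u x₀ t₀ (θ * ρ) b₂ L₂) :
    mnorm (L₂ - L₁) ^ 2 ≤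
      (d * (d + 2) / (θ * ρ) ^ 2) *
        ⨍ z in pcyl x₀ t₀ (θ * ρ), ‖u z.1 z.2 - aff x₀ b₁ L₁ z.1‖ ^ 2 := by
  rcases Nat.eq_zero_or_pos d with hd0 | hd
  · subst hd0
    simp [mnorm]
  set r := θ * ρ with hrdef
  have hr : 0 < r := mul_pos hθ.1 hρ
  set Q : Set (Vec d × ℝ) := pcyl x₀ t₀ r with hQset
  have hQdef : Q = ball x₀ r ×ˢ Ioo (t₀ - r^2) t₀ := hQset
  haveI : Nonempty (Fin d) := ⟨⟨0, hd⟩⟩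
  haveI hnt : Nontrivial (Vec d) := by
    refine nontrivial_of_ne (EuclideanSpace.single ⟨0, hd⟩ (1:ℝ)) 0 fun h => ?_
    have := congrArg norm h
    rw [EuclideanSpace.norm_single, norm_zero] at this
    simp at this
  -- volume facts
  have hIoo : volume (Ioo (t₀ - r^2) t₀) = ENNReal.ofReal (r^2) := by
    rw [Real.volume_Ioo]; ring_nf
  have hvQ : volume Q = volume (ball x₀ r) * volume (Ioo (t₀ - r^2) t₀) := by
    rw [hQdef, ← Measure.prod_prod, ← Measure.volume_eq_prod]
  have hQfin : volume Q < ⊤ := by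
    rw [hvQ, hIoo]
    exact ENNReal.mul_lt_top measure_ball_lt_top ENNReal.ofReal_lt_top
  have hQpos : 0 < volume Q := by
    rw [hvQ, hIoo]
    exact ENNReal.mul_pos (measure_ball_pos _ _ hr).ne'
      (ENNReal.ofReal_pos.mpr (by positivity)).ne'
  have hQt : 0 < (volume Q).toReal := ENNReal.toReal_pos hQpos.ne' hQfin.ne
  haveI : IsFiniteMeasure (volume.restrict Q) := ⟨by rwa [Measure.restrict_apply_univ]⟩
  have hQmeas : MeasurableSet Q := by
    rw [hQdef]; exact measurableSet_ball.prod measurableSet_Ioo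
  -- subset of the big cylinder
  have hrρ : r ≤ ρ := by
    rw [hrdef]
    nlinarith [mul_nonneg (sub_nonneg.mpr hθ.2) hρ.le]
  have hsub : Q ⊆ pcyl x₀ t₀ ρ := by
    rw [hQdef]
    show ball x₀ r ×ˢ Ioo (t₀ - r^2) t₀ ⊆ ball x₀ ρ ×ˢ Ioo (t₀ - ρ^2) t₀
    exact prod_mono (ball_subset_ball hrρ) (Ioo_subset_Ioo (by nlinarith) le_rfl)
  have huQ : MemLp (fun z : Vec d × ℝ => u z.1 z.2) 2 (volume.restrict Q) :=
    hu.mono_measure (Measure.restrict_mono hsub le_rfl)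
  have memaff : ∀ (b : Vec d) (L : Mat d),
      MemLp (fun z : Vec d × ℝ => aff x₀ b L z.1) 2 (volume.restrict Q) := by
    intro b L
    obtain ⟨C, hC⟩ := (isCompact_closedBall x₀ r).exists_bound_of_continuousOn
      (LPSaux.continuous_aff x₀ b L).continuousOn
    refine MemLp.of_bound
      (((LPSaux.continuous_aff x₀ b L).comp continuous_fst).aestronglyMeasurable) C ?_
    filter_upwards [ae_restrict_mem hQmeas] with z hz
    rw [hQdef] at hz
    exact hC z.1 (ball_subset_closedBall hz.1)
  -- minimality at radius r in integral form
  have hint2 : ∀ (b' : Vec d) (L' : Mat d),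
      (∫ z in Q, ‖u z.1 z.2 - aff x₀ b₂ L₂ z.1‖^2)
        ≤ ∫ z in Q, ‖u z.1 z.2 - aff x₀ b' L' z.1‖^2 := by
    intro b' L'
    have h := h₂ b' L'
    rw [← hQset] at h
    simp_rw [Real.rpow_two] at h
    rw [setAverage_eq, setAverage_eq, smul_eq_mul, smul_eq_mul] at h
    exact (mul_le_mul_iff_right₀ (inv_pos.mpr hQt)).mp h
  set db : Vec d := b₁ - b₂ with hdb
  set M : Mat d := L₁ - L₂ with hM
  set fz : Vec d × ℝ → Vec d := fun z => u z.1 z.2 - aff x₀ b₂ L₂ z.1 with hfz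
  set gz : Vec d × ℝ → Vec d := fun z => aff x₀ db M z.1 with hgz
  have hminS : ∀ s : ℝ, (∫ z in Q, ‖fz z‖^2) ≤ ∫ z in Q, ‖fz z - s • gz z‖^2 := by
    intro s
    have h := hint2 (b₂ + s • db) (L₂ + s • M)
    have hpt : ∀ z : Vec d × ℝ,
        u z.1 z.2 - aff x₀ (b₂ + s • db) (L₂ + s • M) z.1 = fz z - s • gz z := by
      intro z
      rw [LPSaux.aff_lin]
      show u z.1 z.2 - (aff x₀ b₂ L₂ z.1 + s • aff x₀ db M z.1)
          = (u z.1 z.2 - aff x₀ b₂ L₂ z.1) - s • aff x₀ db M z.1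
      abel
    calc (∫ z in Q, ‖fz z‖^2)
        ≤ ∫ z in Q, ‖u z.1 z.2 - aff x₀ (b₂ + s • db) (L₂ + s • M) z.1‖^2 := h
      _ = ∫ z in Q, ‖fz z - s • gz z‖^2 := by simp_rw [hpt]
  have hfg2 : MemLp fz 2 (volume.restrict Q) := huQ.sub (memaff _ _)
  have hgg2 : MemLp gz 2 (volume.restrict Q) := memaff _ _
  have horth := LPSaux.ortho_aux (volume.restrict Q) fz gz hfg2 hgg2 hminS
  set I := ∫ z in Q, ‖u z.1 z.2 - aff x₀ b₁ L₁ z.1‖^2 with hIdef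
  have hI0 : 0 ≤ I := integral_nonneg fun z => sq_nonneg _
  have hIg : (∫ z in Q, ‖gz z‖^2) ≤ I := by
    have he1 : b₂ + db = b₁ := by rw [hdb]; abel
    have he2 : L₂ + M = L₁ := by rw [hM]; abel
    have hfgpt : ∀ z : Vec d × ℝ, fz z - gz z = u z.1 z.2 - aff x₀ b₁ L₁ z.1 := by
      intro z
      show (u z.1 z.2 - aff x₀ b₂ L₂ z.1) - aff x₀ db M z.1 = _
      rw [sub_sub, LPSaux.aff_add, he1, he2]
    rw [hIdef]
    simp_rw [← hfgpt]
    exact horth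
  -- Fubini: split the cylinder integral
  have hsplit : (∫ z in Q, ‖gz z‖^2)
      = (∫ x in ball x₀ r, ‖aff x₀ db M x‖^2) * r^2 := by
    have h1 : (∫ z in Q, ‖gz z‖^2)
        = ∫ z in ball x₀ r ×ˢ Ioo (t₀ - r^2) t₀,
            (fun x => ‖aff x₀ db M x‖^2) z.1 * (fun _ : ℝ => (1:ℝ)) z.2 := by
      rw [hQdef]
      simp only [mul_one]
      rfl
    have h2 : ∫ z in ball x₀ r ×ˢ Ioo (t₀ - r^2) t₀,
        (fun x => ‖aff x₀ db M x‖^2) z.1 * (fun _ : ℝ => (1:ℝ)) z.2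
          ∂(volume : Measure (Vec d)).prod volume
        = (∫ x in ball x₀ r, ‖aff x₀ db M x‖^2) * ∫ _y in Ioo (t₀ - r^2) t₀, (1:ℝ) :=
      setIntegral_prod_mul (L := ℝ) (fun x => ‖aff x₀ db M x‖^2) (fun _ : ℝ => (1:ℝ))
        (ball x₀ r) (Ioo (t₀ - r^2) t₀)
    rw [h1,
      show (volume : Measure (Vec d × ℝ)) = (volume : Measure (Vec d)).prod volume from
        Measure.volume_eq_prod _ _,
      h2, setIntegral_const, measureReal_def, hIoo, smul_eq_mul, mul_one,
      ENNReal.toReal_ofReal (by positivity)]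
  -- translate the ball to the origin
  have htr : (∫ x in ball x₀ r, ‖aff x₀ db M x‖^2)
      = ∫ y in ball (0 : Vec d) r, ‖aff x₀ db M (x₀ + y)‖^2 := by
    have e := measurePreserving_add_left (volume : Measure (Vec d)) x₀
    have emb : MeasurableEmbedding (fun y : Vec d => x₀ + y) :=
      (Homeomorph.addLeft x₀).measurableEmbedding
    have h := e.setIntegral_preimage_emb emb (fun x => ‖aff x₀ db M x‖^2) (ball x₀ r)
    have hpre : (fun y : Vec d => x₀ + y) ⁻¹' ball x₀ r = ball (0 : Vec d) r := by
      ext y; simp [mem_ball, dist_eq_norm]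
    rw [hpre] at h
    exact h.symm
  -- moment computation on the centered ball
  set c := ∫ y in ball (0 : Vec d) r, (y ⟨0, hd⟩)^2 with hcdef
  set S := ∑ i, ∑ j, (M i j)^2 with hSdef
  set row : Fin d → Vec d :=
    fun i => (EuclideanSpace.equiv (Fin d) ℝ).symm (fun j => M i j) with hrow
  set wv : Vec d :=
    (EuclideanSpace.equiv (Fin d) ℝ).symm (fun j => ∑ i, db i * M i j) with hwv
  have hptm : ∀ y : Vec d, ‖aff x₀ db M (x₀ + y)‖^2
      = ‖db‖^2 + 2 * ⟪wv, y⟫ + ∑ i, ⟪row i, y⟫^2 := by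
    intro y
    have hcoord : aff x₀ db M (x₀ + y)
        = db + (EuclideanSpace.equiv (Fin d) ℝ).symm (fun i => ∑ j, M i j * y j) := by
      ext k
      show db k + ∑ j, M k j * ((x₀ + y) j - x₀ j) = db k + ∑ j, M k j * y j
      congr 1
      exact Finset.sum_congr rfl fun j _ => by
        show M k j * (x₀ j + y j - x₀ j) = M k j * y j
        ring
    have h2 : ⟪db, (EuclideanSpace.equiv (Fin d) ℝ).symm (fun i => ∑ j, M i j * y j)⟫
        = ⟪wv, y⟫ := by
      rw [LPSaux.inner_eq_sum, LPSaux.inner_eq_sum]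
      show ∑ i, db i * (∑ j, M i j * y j) = ∑ j, (∑ i, db i * M i j) * y j
      simp_rw [Finset.mul_sum, Finset.sum_mul]
      rw [Finset.sum_comm]
      exact Finset.sum_congr rfl fun j _ => Finset.sum_congr rfl fun i _ => by ring
    have h3 : ‖(EuclideanSpace.equiv (Fin d) ℝ).symm (fun i => ∑ j, M i j * y j)‖^2
        = ∑ i, ⟪row i, y⟫^2 := by
      rw [LPSaux.norm_sq_eq]
      refine Finset.sum_congr rfl fun i _ => ?_
      rw [LPSaux.inner_eq_sum]
      rfl
    rw [hcoord, norm_add_sq_real, h2, h3]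
  have i1 : IntegrableOn (fun _ : Vec d => ‖db‖^2) (ball (0:Vec d) r) volume :=
    (integrableOn_const_iff (by finiteness)).mpr (Or.inr measure_ball_lt_top)
  have i2 : IntegrableOn (fun y : Vec d => 2 * ⟪wv, y⟫) (ball (0:Vec d) r) volume :=
    LPSaux.integrableOn_ball_of_continuous
      (continuous_const.mul (continuous_const.inner continuous_id)) _ _
  have i3each : ∀ i : Fin d, Continuous (fun y : Vec d => ⟪row i, y⟫^2) := fun i =>
    ((continuous_const.inner continuous_id).pow 2)
  have i3 : IntegrableOn (fun y : Vec d => ∑ i, ⟪row i, y⟫^2) (ball (0:Vec d) r) volume :=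
    LPSaux.integrableOn_ball_of_continuous (continuous_finset_sum _ fun i _ => i3each i) _ _
  have i12 : IntegrableOn (fun y : Vec d => ‖db‖^2 + 2 * ⟪wv, y⟫) (ball (0:Vec d) r) volume :=
    LPSaux.integrableOn_ball_of_continuous
      (continuous_const.add (continuous_const.mul (continuous_const.inner continuous_id))) _ _
  have hrowsum : ∑ i, ‖row i‖^2 = S := by
    rw [hSdef]
    refine Finset.sum_congr rfl fun i _ => ?_
    rw [LPSaux.norm_sq_eq]
    rfl
  have hmom : (∫ y in ball (0:Vec d) r, ‖aff x₀ db M (x₀ + y)‖^2)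
      = (volume (ball (0:Vec d) r)).toReal * ‖db‖^2 + S * c := by
    calc (∫ y in ball (0:Vec d) r, ‖aff x₀ db M (x₀ + y)‖^2)
        = ∫ y in ball (0:Vec d) r, (‖db‖^2 + 2 * ⟪wv, y⟫ + ∑ i, ⟪row i, y⟫^2) := by
          simp_rw [hptm]
      _ = (∫ y in ball (0:Vec d) r, (‖db‖^2 + 2 * ⟪wv, y⟫))
            + ∫ y in ball (0:Vec d) r, ∑ i, ⟪row i, y⟫^2 := integral_add i12 i3
      _ = (volume (ball (0:Vec d) r)).toReal * ‖db‖^2 + S * c := by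
          rw [integral_add i1 i2, setIntegral_const, MeasureTheory.integral_const_mul,
            LPSaux.ball_inner_zero,
            integral_finset_sum _
              (fun i _ => LPSaux.integrableOn_ball_of_continuous (i3each i) _ _)]
          simp_rw [LPSaux.ball_inner_sq hd r]
          rw [← hcdef, ← Finset.sum_mul, hrowsum, smul_eq_mul, measureReal_def]
          ring
  -- value of c
  set v1 := (volume (ball (0:Vec d) 1)).toReal with hv1def
  have hvol1 : 0 < v1 :=
    ENNReal.toReal_pos (measure_ball_pos _ _ one_pos).ne' measure_ball_lt_top.ne
  have hco : ∀ j : Fin d, Continuous fun y : Vec d => (y j)^2 := fun j =>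
    ((continuous_apply j).comp (EuclideanSpace.equiv (Fin d) ℝ).continuous).pow 2
  have h3c : ∀ j : Fin d, (∫ y in ball (0:Vec d) r, (y j)^2) = c := by
    intro j
    have h4 := LPSaux.ball_inner_sq hd r (EuclideanSpace.single j (1:ℝ))
    have h5 : ∀ y : Vec d, ⟪EuclideanSpace.single j (1:ℝ), y⟫ = y j := by
      intro y; rw [EuclideanSpace.inner_single_left]; simp
    simp_rw [h5] at h4
    rw [h4, EuclideanSpace.norm_single, ← hcdef]
    simp
  have hdc : (d:ℝ) * c = (d:ℝ) * v1 * (r^(d+2)/((d:ℝ)+2)) := by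
    have h1 := LPSaux.ball_norm_sq_int (d := d) hd hr
    rw [← hv1def] at h1
    have h2 : ∫ y in ball (0:Vec d) r, ‖y‖^2
        = ∑ j : Fin d, ∫ y in ball (0:Vec d) r, (y j)^2 := by
      simp_rw [LPSaux.norm_sq_eq]
      exact integral_finset_sum _
        (fun j _ => LPSaux.integrableOn_ball_of_continuous (hco j) _ _)
    calc (d:ℝ) * c = ∑ _j : Fin d, c := by
          rw [Finset.sum_const, Finset.card_univ, Fintype.card_fin, nsmul_eq_mul]
      _ = ∑ j : Fin d, ∫ y in ball (0:Vec d) r, (y j)^2 :=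
          Finset.sum_congr rfl fun j _ => (h3c j).symm
      _ = ∫ y in ball (0:Vec d) r, ‖y‖^2 := h2.symm
      _ = (d:ℝ) * v1 * (r^(d+2)/((d:ℝ)+2)) := h1
  have hdne : (d:ℝ) ≠ 0 := Nat.cast_ne_zero.mpr hd.ne'
  have hc : c = v1 * (r^(d+2)/((d:ℝ)+2)) := by
    apply mul_left_cancel₀ hdne
    rw [hdc]; ring
  have hc0 : 0 < c := by
    rw [hc]; positivity
  -- volumes of the balls
  have hvB0 : (volume (ball (0:Vec d) r)).toReal = r^d * v1 := by
    rw [Measure.addHaar_ball volume (0:Vec d) hr.le,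
      show Module.finrank ℝ (Vec d) = d from finrank_euclideanSpace_fin,
      ENNReal.toReal_mul, ENNReal.toReal_ofReal (by positivity), ← hv1def]
  have hvB : (volume (ball x₀ r)).toReal = r^d * v1 := by
    rw [Measure.addHaar_ball volume x₀ hr.le,
      show Module.finrank ℝ (Vec d) = d from finrank_euclideanSpace_fin,
      ENNReal.toReal_mul, ENNReal.toReal_ofReal (by positivity), ← hv1def]
  have hvQt : (volume Q).toReal = (r^d * v1) * r^2 := by
    rw [hvQ, hIoo, ENNReal.toReal_mul, ENNReal.toReal_ofReal (by positivity), hvB]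
  -- the key estimate
  have K1 : S * c * r^2 ≤ I := by
    have h1 : (∫ z in Q, ‖gz z‖^2)
        = ((volume (ball (0:Vec d) r)).toReal * ‖db‖^2 + S * c) * r^2 := by
      rw [hsplit, htr, hmom]
    have h2 := hIg
    rw [h1] at h2
    nlinarith [mul_nonneg (ENNReal.toReal_nonneg (a := volume (ball (0:Vec d) r)))
      (sq_nonneg ‖db‖), sq_nonneg r, hr]
  -- rewrite the goal
  have hS0 : 0 ≤ S := by
    rw [hSdef]
    positivity
  have hmnorm : mnorm (L₂ - L₁)^2 = S := by
    unfold mnorm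
    rw [Real.sq_sqrt (by positivity), hSdef]
    refine Finset.sum_congr rfl fun i _ => Finset.sum_congr rfl fun j _ => ?_
    show (L₂ i j - L₁ i j)^2 = (L₁ i j - L₂ i j)^2
    ring
  rw [hmnorm, setAverage_eq, smul_eq_mul, ← hIdef, measureReal_def, hvQt]
  have hd1 : (1:ℝ) ≤ (d:ℝ) := by exact_mod_cast hd
  set A := r^2 * ((r^d * v1) * r^2) with hA
  have hApos : 0 < A := by rw [hA]; positivity
  have h2 : S * A ≤ ((d:ℝ)*((d:ℝ)+2)) * I := by
    have e1 : S * A = (S * c * r^2) * ((d:ℝ)+2) := by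
      rw [hA, hc, pow_add]
      have : ((d:ℝ)+2) ≠ 0 := by positivity
      field_simp
    rw [e1]
    calc (S * c * r^2) * ((d:ℝ)+2) ≤ I * ((d:ℝ)+2) :=
        mul_le_mul_of_nonneg_right K1 (by positivity)
      _ ≤ ((d:ℝ)*((d:ℝ)+2)) * I := by
          nlinarith [mul_nonneg (sub_nonneg.mpr hd1) hI0,
            (by positivity : (0:ℝ) ≤ (d:ℝ)+2)]
  calc S = S * A / A := by field_simp
    _ ≤ ((d:ℝ)*((d:ℝ)+2)) * I / A := by
        exact (div_le_div_iff_of_pos_right hApos).mpr h2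
    _ = (d:ℝ)*((d:ℝ)+2)/r^2 * (((r^d * v1) * r^2)⁻¹ * I) := by
        rw [hA]
        field_simp

end
end

section
/- (Algebraic inequalities, part 1.) Let p ≥ 2 and let A = A(z,u,q) satisfy the Hölder-type structure condition (2.4). Then there is a nondecreasing function M ↦ C(M) (depending only on the data in (2.4)) such that for every ρ ≤ 1, every parabolic cylinder Q_ρ(z₀), every z ∈ Q_ρ(z₀), every u ∈ ℝ^d, every symmetric matrix P ∈ Sym^{d×d}, and every affine time-independent function l(x), with C = C(|l(z₀)| + |∇l|): (5.2) |A(z₀, l(z₀), P) − A(z, u, P)| ≤ C·ρ^β·[1 + |P − 𝔻l|^p + |(u−l(x))/ρ|^p], and (5.3) |A(z₀, l(z₀), 𝔻l) − A(z, u, 𝔻l)| ≤ C·ρ^β·[1 + |(u−l(x))/ρ|^β]. -/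
open MeasureTheory Metric Set Filter

noncomputable section

lemma mnorm_nonneg' {d : ℕ} (M : Mat d) : 0 ≤ mnorm M := Real.sqrt_nonneg _

lemma mnorm_eq_norm {d : ℕ} (M : Mat d) :
    mnorm M = ‖((WithLp.equiv 2 (Fin d × Fin d → ℝ)).symm fun p => M p.1 p.2 :
      EuclideanSpace ℝ (Fin d × Fin d))‖ := by
  rw [EuclideanSpace.norm_eq, mnorm]
  congr 1
  rw [Fintype.sum_prod_type]
  simp [WithLp.equiv_symm_apply, PiLp.toLp_apply, Real.norm_eq_abs, sq_abs]

lemma mnorm_tri {d : ℕ} (X Y : Mat d) : mnorm X ≤ mnorm (X - Y) + mnorm Y := by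
  rw [mnorm_eq_norm, mnorm_eq_norm, mnorm_eq_norm]
  have h : ((WithLp.equiv 2 (Fin d × Fin d → ℝ)).symm fun p => X p.1 p.2 :
      EuclideanSpace ℝ (Fin d × Fin d))
      = ((WithLp.equiv 2 (Fin d × Fin d → ℝ)).symm fun p => (X - Y) p.1 p.2)
        + ((WithLp.equiv 2 (Fin d × Fin d → ℝ)).symm fun p => Y p.1 p.2) := by
    ext q
    simp [WithLp.equiv_symm_apply, PiLp.toLp_apply]
  rw [h]
  exact norm_add_le _ _

lemma mnorm_symPart_le {d : ℕ} (L : Mat d) : mnorm (symPart L) ≤ mnorm L := by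
  unfold mnorm symPart
  apply Real.sqrt_le_sqrt
  calc ∑ i, ∑ j, ((L i j + L j i) / 2) ^ 2
      ≤ ∑ i, ∑ j, (L i j ^ 2 + L j i ^ 2) / 2 := by
        refine Finset.sum_le_sum fun i _ => Finset.sum_le_sum fun j _ => ?_
        nlinarith [sq_nonneg (L i j - L j i)]
    _ = ∑ i, ∑ j, L i j ^ 2 := by
        have hsplit : (∑ i, ∑ j, (L i j ^ 2 + L j i ^ 2))
            = (∑ i, ∑ j, L i j ^ 2) + ∑ i, ∑ j, L j i ^ 2 := by
          simp [Finset.sum_add_distrib]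
        have hc : (∑ i, ∑ j, L j i ^ 2) = ∑ i, ∑ j, L i j ^ 2 := Finset.sum_comm
        simp only [← Finset.sum_div, hsplit, hc]
        ring

lemma matvec_le {d : ℕ} (L : Mat d) (w : Fin d → ℝ) :
    Real.sqrt (∑ i, (∑ j, L i j * w j) ^ 2) ≤ mnorm L * Real.sqrt (∑ j, (w j) ^ 2) := by
  rw [mnorm, ← Real.sqrt_mul (by positivity)]
  apply Real.sqrt_le_sqrt
  rw [Finset.sum_mul]
  exact Finset.sum_le_sum fun i _ => Finset.sum_mul_sq_le_sq_mul_sq _ _ _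

lemma aff_sub_le {d : ℕ} (x₀ b : Vec d) (L : Mat d) (x : Vec d) :
    ‖aff x₀ b L x - b‖ ≤ mnorm L * ‖x - x₀‖ := by
  have h1 : aff x₀ b L x - b
      = (EuclideanSpace.equiv (Fin d) ℝ).symm (fun i => ∑ j, L i j * (x j - x₀ j)) := by
    unfold aff; rw [add_sub_cancel_left]
  rw [h1, EuclideanSpace.norm_eq, EuclideanSpace.norm_eq]
  have h2 : ∀ i, ‖((EuclideanSpace.equiv (Fin d) ℝ).symm
      (fun i => ∑ j, L i j * (x j - x₀ j))) i‖ ^ 2 = (∑ j, L i j * (x j - x₀ j)) ^ 2 := by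
    intro i; simp [Real.norm_eq_abs, sq_abs]
  simp only [h2]
  have h3 : ∀ j, ‖(x - x₀) j‖ ^ 2 = (x j - x₀ j) ^ 2 := by
    intro j; simp [Real.norm_eq_abs, sq_abs]
  simp only [h3]
  exact matvec_le L _

lemma rpow_le_one_add_rpow (a q p : ℝ) (ha : 0 ≤ a) (hq : 0 ≤ q) (hqp : q ≤ p) :
    a ^ q ≤ 1 + a ^ p := by
  rcases le_or_gt a 1 with h | h
  · have h1 := Real.rpow_le_one ha h hq
    have h2 := Real.rpow_nonneg ha p
    linarith
  · have h1 := Real.rpow_le_rpow_of_exponent_le h.le hqp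
    linarith

lemma add_rpow_le (a m r : ℝ) (ha : 0 ≤ a) (hm : 0 ≤ m) (hr : 0 ≤ r) :
    (a + m) ^ r ≤ 2 ^ r * (a ^ r + m ^ r) := by
  have hmax : 0 ≤ max a m := le_trans ha (le_max_left _ _)
  have h1 : a + m ≤ 2 * max a m := by
    rcases max_cases a m with ⟨h, h'⟩ | ⟨h, h'⟩ <;> rw [h] <;> linarith
  calc (a + m) ^ r ≤ (2 * max a m) ^ r := Real.rpow_le_rpow (by linarith) h1 hr
    _ = 2 ^ r * (max a m) ^ r := Real.mul_rpow (by norm_num) hmax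
    _ ≤ 2 ^ r * (a ^ r + m ^ r) := by
        have h2 : (max a m) ^ r ≤ a ^ r + m ^ r := by
          rcases max_cases a m with ⟨h, _⟩ | ⟨h, _⟩ <;> rw [h]
          · nlinarith [Real.rpow_nonneg hm r]
          · nlinarith [Real.rpow_nonneg ha r]
        have h3 : (0:ℝ) ≤ 2 ^ r := Real.rpow_nonneg (by norm_num) r
        nlinarith

lemma cross_rpow (bb a β p : ℝ) (hb : 1 ≤ bb) (ha : 0 ≤ a) (hβ0 : 0 ≤ β) (hβ1 : β ≤ 1)
    (hp : 2 ≤ p) : bb ^ β * a ^ (p - 1) ≤ a ^ p + bb ^ p := by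
  have hb0 : (0:ℝ) < bb := lt_of_lt_of_le one_pos hb
  rcases le_total a bb with h | h
  · have h1 : a ^ (p - 1) ≤ bb ^ (p - 1) := Real.rpow_le_rpow ha h (by linarith)
    have h2 : bb ^ β * bb ^ (p - 1) = bb ^ (β + (p - 1)) := (Real.rpow_add hb0 _ _).symm
    have h3 : bb ^ (β + (p - 1)) ≤ bb ^ p := Real.rpow_le_rpow_of_exponent_le hb (by linarith)
    have h4 : (0:ℝ) ≤ bb ^ β := Real.rpow_nonneg hb0.le β
    nlinarith [Real.rpow_nonneg ha p]
  · have ha1 : 1 ≤ a := le_trans hb h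
    have ha0 : (0:ℝ) < a := lt_of_lt_of_le one_pos ha1
    have h1 : bb ^ β ≤ a ^ β := Real.rpow_le_rpow hb0.le h hβ0
    have h2 : a ^ β * a ^ (p - 1) = a ^ (β + (p - 1)) := (Real.rpow_add ha0 _ _).symm
    have h3 : a ^ (β + (p - 1)) ≤ a ^ p := Real.rpow_le_rpow_of_exponent_le ha1 (by linarith)
    have h4 : (0:ℝ) ≤ a ^ (p - 1) := Real.rpow_nonneg ha0.le _
    nlinarith [Real.rpow_nonneg hb0.le p]

lemma keyA (p β ρ s a m D : ℝ) (hp : 2 ≤ p) (hβ0 : 0 < β) (hβ1 : β < 1)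
    (hρ : 0 < ρ) (hρ1 : ρ ≤ 1) (hs : 0 ≤ s) (ha : 0 ≤ a) (hm : 0 ≤ m)
    (hD0 : 0 ≤ D) (hD : D ≤ (2 + m) * ρ + s) :
    D ^ β * (1 + (a + m) ^ (p - 1)) ≤
      (3 + m) * (1 + 2 ^ (p - 1) * (1 + m ^ (p - 1))) * (ρ ^ β * (1 + a ^ p + (s / ρ) ^ p)) := by
  set bb := s / ρ with hbdef
  clear_value bb
  have hbb0 : 0 ≤ bb := by rw [hbdef]; exact div_nonneg hs hρ.le
  have hsb : s = bb * ρ := by rw [hbdef]; field_simp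
  set T := (2:ℝ) ^ (p - 1) with hTdef
  clear_value T
  have hT1 : 1 ≤ T := by
    rw [hTdef]
    have := Real.rpow_le_rpow_of_exponent_le (one_le_two) (show (0:ℝ) ≤ p - 1 by linarith)
    simpa [Real.rpow_zero] using this
  have hT0 : (0:ℝ) ≤ T := by linarith
  have hX : (0:ℝ) ≤ a ^ p := Real.rpow_nonneg ha p
  have hY : (0:ℝ) ≤ bb ^ p := Real.rpow_nonneg hbb0 p
  have hMp : (0:ℝ) ≤ m ^ (p - 1) := Real.rpow_nonneg hm _
  have hAp : (0:ℝ) ≤ a ^ (p - 1) := Real.rpow_nonneg ha _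
  have hR : (0:ℝ) ≤ ρ ^ β := Real.rpow_nonneg hρ.le β
  have hAp1 : a ^ (p - 1) ≤ 1 + a ^ p := rpow_le_one_add_rpow a (p - 1) p ha (by linarith) (by linarith)
  have hAM : (a + m) ^ (p - 1) ≤ T * (a ^ (p - 1) + m ^ (p - 1)) := by
    rw [hTdef]; exact add_rpow_le a m (p - 1) ha hm (by linarith)
  have hAM0 : (0:ℝ) ≤ (a + m) ^ (p - 1) := Real.rpow_nonneg (by linarith) _
  have h3m : (1:ℝ) ≤ 3 + m := by linarith
  rcases le_or_gt bb 1 with hb1 | hb1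
  · -- s ≤ ρ
    have hsρ : s ≤ ρ := by rw [hsb]; nlinarith
    have hDle : D ≤ (3 + m) * ρ := by linarith
    have hDβ : D ^ β ≤ (3 + m) * ρ ^ β := by
      calc D ^ β ≤ ((3 + m) * ρ) ^ β := Real.rpow_le_rpow hD0 hDle hβ0.le
        _ = (3 + m) ^ β * ρ ^ β := Real.mul_rpow (by linarith) hρ.le
        _ ≤ (3 + m) * ρ ^ β := by
            have : (3 + m) ^ β ≤ (3 + m) ^ (1:ℝ) :=
              Real.rpow_le_rpow_of_exponent_le h3m hβ1.le
            rw [Real.rpow_one] at this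
            exact mul_le_mul_of_nonneg_right this hR
    have key : 1 + (a + m) ^ (p - 1) ≤ (1 + T * (1 + m ^ (p - 1))) * (1 + a ^ p + bb ^ p) := by
      nlinarith [mul_le_mul_of_nonneg_left hAp1 hT0, mul_nonneg (mul_nonneg hT0 hMp) hX,
        mul_nonneg hT0 hY, mul_nonneg (mul_nonneg hT0 hMp) hY, mul_nonneg hT0 hX,
        mul_nonneg hT0 hMp]
    calc D ^ β * (1 + (a + m) ^ (p - 1))
        ≤ ((3 + m) * ρ ^ β) * ((1 + T * (1 + m ^ (p - 1))) * (1 + a ^ p + bb ^ p)) := by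
          exact mul_le_mul hDβ key (by linarith) (mul_nonneg (by linarith) hR)
      _ = (3 + m) * (1 + T * (1 + m ^ (p - 1))) * (ρ ^ β * (1 + a ^ p + bb ^ p)) := by ring
  · -- s > ρ
    have hρs : ρ ≤ s := by rw [hsb]; exact (le_mul_iff_one_le_left hρ).mpr hb1.le
    have hDle : D ≤ (3 + m) * s := by
      have h2 := mul_le_mul_of_nonneg_left hρs (show (0:ℝ) ≤ 2 + m by linarith)
      linarith
    have hs0 : 0 < s := lt_of_lt_of_le hρ hρs
    have hbβ0 : (0:ℝ) ≤ bb ^ β := Real.rpow_nonneg hbb0 β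
    have hDβ : D ^ β ≤ (3 + m) * (bb ^ β * ρ ^ β) := by
      calc D ^ β ≤ ((3 + m) * s) ^ β := Real.rpow_le_rpow hD0 hDle hβ0.le
        _ = (3 + m) ^ β * s ^ β := Real.mul_rpow (by linarith) hs0.le
        _ = (3 + m) ^ β * (bb ^ β * ρ ^ β) := by rw [hsb, Real.mul_rpow hbb0 hρ.le]
        _ ≤ (3 + m) * (bb ^ β * ρ ^ β) := by
            have : (3 + m) ^ β ≤ (3 + m) ^ (1:ℝ) :=
              Real.rpow_le_rpow_of_exponent_le h3m hβ1.le
            rw [Real.rpow_one] at this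
            exact mul_le_mul_of_nonneg_right this (mul_nonneg hbβ0 hR)
    have hbβp : bb ^ β ≤ bb ^ p := Real.rpow_le_rpow_of_exponent_le hb1.le (by linarith)
    have hcross : bb ^ β * a ^ (p - 1) ≤ a ^ p + bb ^ p :=
      cross_rpow bb a β p hb1.le ha hβ0.le hβ1.le hp
    have key : bb ^ β * (1 + T * (a ^ (p - 1) + m ^ (p - 1)))
        ≤ (1 + T * (1 + m ^ (p - 1))) * (1 + a ^ p + bb ^ p) := by
      nlinarith [mul_le_mul_of_nonneg_left hcross hT0,
        mul_le_mul_of_nonneg_left hbβp (mul_nonneg hT0 hMp),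
        mul_nonneg hT0 hX, mul_nonneg hT0 hY, mul_nonneg (mul_nonneg hT0 hMp) hX,
        mul_nonneg hT0 hMp, mul_nonneg hT0 hAp]
    calc D ^ β * (1 + (a + m) ^ (p - 1))
        ≤ ((3 + m) * (bb ^ β * ρ ^ β)) * (1 + T * (a ^ (p - 1) + m ^ (p - 1))) :=
          mul_le_mul hDβ (by linarith) (by linarith)
            (mul_nonneg (by linarith) (mul_nonneg hbβ0 hR))
      _ = ((3 + m) * ρ ^ β) * (bb ^ β * (1 + T * (a ^ (p - 1) + m ^ (p - 1)))) := by ring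
      _ ≤ ((3 + m) * ρ ^ β) * ((1 + T * (1 + m ^ (p - 1))) * (1 + a ^ p + bb ^ p)) := by
          exact mul_le_mul_of_nonneg_left key (mul_nonneg (by linarith) hR)
      _ = (3 + m) * (1 + T * (1 + m ^ (p - 1))) * (ρ ^ β * (1 + a ^ p + bb ^ p)) := by ring

lemma keyB (p β ρ s m D : ℝ) (hp : 2 ≤ p) (hβ0 : 0 < β) (hβ1 : β < 1)
    (hρ : 0 < ρ) (hρ1 : ρ ≤ 1) (hs : 0 ≤ s) (hm : 0 ≤ m)
    (hD0 : 0 ≤ D) (hD : D ≤ (2 + m) * ρ + s) :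
    D ^ β * (1 + m ^ (p - 1)) ≤
      (3 + m) * (1 + 2 ^ (p - 1) * (1 + m ^ (p - 1))) * (ρ ^ β * (1 + (s / ρ) ^ β)) := by
  set bb := s / ρ with hbdef
  clear_value bb
  have hbb0 : 0 ≤ bb := by rw [hbdef]; exact div_nonneg hs hρ.le
  have hsb : s = bb * ρ := by rw [hbdef]; field_simp
  set T := (2:ℝ) ^ (p - 1) with hTdef
  clear_value T
  have hT1 : 1 ≤ T := by
    rw [hTdef]
    have := Real.rpow_le_rpow_of_exponent_le (one_le_two) (show (0:ℝ) ≤ p - 1 by linarith)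
    simpa [Real.rpow_zero] using this
  have hMp : (0:ℝ) ≤ m ^ (p - 1) := Real.rpow_nonneg hm _
  have hR : (0:ℝ) ≤ ρ ^ β := Real.rpow_nonneg hρ.le β
  have hbβ0 : (0:ℝ) ≤ bb ^ β := Real.rpow_nonneg hbb0 β
  have h3m : (1:ℝ) ≤ 3 + m := by linarith
  have hfac : 1 + m ^ (p - 1) ≤ (1 + T * (1 + m ^ (p - 1))) * (1 + bb ^ β) := by
    nlinarith [mul_nonneg (mul_nonneg (by linarith : (0:ℝ) ≤ T) (by linarith : (0:ℝ) ≤ 1 + m ^ (p-1))) hbβ0]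
  rcases le_or_gt bb 1 with hb1 | hb1
  · have hsρ : s ≤ ρ := by rw [hsb]; nlinarith
    have hDle : D ≤ (3 + m) * ρ := by linarith
    have hDβ : D ^ β ≤ (3 + m) * ρ ^ β := by
      calc D ^ β ≤ ((3 + m) * ρ) ^ β := Real.rpow_le_rpow hD0 hDle hβ0.le
        _ = (3 + m) ^ β * ρ ^ β := Real.mul_rpow (by linarith) hρ.le
        _ ≤ (3 + m) * ρ ^ β := by
            have : (3 + m) ^ β ≤ (3 + m) ^ (1:ℝ) :=
              Real.rpow_le_rpow_of_exponent_le h3m hβ1.le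
            rw [Real.rpow_one] at this
            exact mul_le_mul_of_nonneg_right this hR
    calc D ^ β * (1 + m ^ (p - 1))
        ≤ ((3 + m) * ρ ^ β) * ((1 + T * (1 + m ^ (p - 1))) * (1 + bb ^ β)) := by
          exact mul_le_mul hDβ hfac (by linarith) (mul_nonneg (by linarith) hR)
      _ = (3 + m) * (1 + T * (1 + m ^ (p - 1))) * (ρ ^ β * (1 + bb ^ β)) := by ring
  · have hρs : ρ ≤ s := by rw [hsb]; exact (le_mul_iff_one_le_left hρ).mpr hb1.le
    have hDle : D ≤ (3 + m) * s := by
      have h2 := mul_le_mul_of_nonneg_left hρs (show (0:ℝ) ≤ 2 + m by linarith)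
      linarith
    have hs0 : 0 < s := lt_of_lt_of_le hρ hρs
    have hDβ : D ^ β ≤ (3 + m) * (bb ^ β * ρ ^ β) := by
      calc D ^ β ≤ ((3 + m) * s) ^ β := Real.rpow_le_rpow hD0 hDle hβ0.le
        _ = (3 + m) ^ β * s ^ β := Real.mul_rpow (by linarith) hs0.le
        _ = (3 + m) ^ β * (bb ^ β * ρ ^ β) := by rw [hsb, Real.mul_rpow hbb0 hρ.le]
        _ ≤ (3 + m) * (bb ^ β * ρ ^ β) := by
            have : (3 + m) ^ β ≤ (3 + m) ^ (1:ℝ) :=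
              Real.rpow_le_rpow_of_exponent_le h3m hβ1.le
            rw [Real.rpow_one] at this
            exact mul_le_mul_of_nonneg_right this (mul_nonneg hbβ0 hR)
    have key : bb ^ β * (1 + m ^ (p - 1)) ≤ (1 + T * (1 + m ^ (p - 1))) * (1 + bb ^ β) := by
      nlinarith [mul_nonneg hMp hbβ0, mul_nonneg (mul_nonneg (by linarith : (0:ℝ) ≤ T) hMp) hbβ0,
        mul_nonneg (by linarith : (0:ℝ) ≤ T) hbβ0]
    calc D ^ β * (1 + m ^ (p - 1))
        ≤ ((3 + m) * (bb ^ β * ρ ^ β)) * (1 + m ^ (p - 1)) := by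
          apply mul_le_mul_of_nonneg_right hDβ (by linarith)
      _ = ((3 + m) * ρ ^ β) * (bb ^ β * (1 + m ^ (p - 1))) := by ring
      _ ≤ ((3 + m) * ρ ^ β) * ((1 + T * (1 + m ^ (p - 1))) * (1 + bb ^ β)) := by
          exact mul_le_mul_of_nonneg_left key (mul_nonneg (by linarith) hR)
      _ = (3 + m) * (1 + T * (1 + m ^ (p - 1))) * (ρ ^ β * (1 + bb ^ β)) := by ring

/-- algebraic inequalities (5.2) and (5.3) of Lemma 5.1. -/
theorem algebraic_inequalities_part1
    {d : ℕ} (p : ℝ) (hp : 2 ≤ p)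
    (A : (Vec d × ℝ) → Vec d → Mat d → Mat d)
    (C β : ℝ) (hC : 0 < C) (hβ : β ∈ Ioo (0 : ℝ) 1)
    (K : ℝ → ℝ) (h24 : Cond24 p C β K A) :
    ∃ Cf : ℝ → ℝ, Monotone Cf ∧ (∀ M, 0 < Cf M) ∧
      ∀ (x₀ : Vec d) (t₀ ρ : ℝ), 0 < ρ → ρ ≤ 1 →
      ∀ z ∈ pcyl x₀ t₀ ρ, ∀ (uv b : Vec d) (P L : Mat d),
        (∀ i j, P i j = P j i) →
        mnorm (A (x₀, t₀) b P - A z uv P) ≤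
          Cf (‖b‖ + mnorm L) * ρ ^ β *
            (1 + mnorm (P - symPart L) ^ p + (‖uv - aff x₀ b L z.1‖ / ρ) ^ p) ∧
        mnorm (A (x₀, t₀) b (symPart L) - A z uv (symPart L)) ≤
          Cf (‖b‖ + mnorm L) * ρ ^ β * (1 + (‖uv - aff x₀ b L z.1‖ / ρ) ^ β) := by
  obtain ⟨hβ0, hβ1⟩ := hβ
  obtain ⟨hKmono, hK1, h24'⟩ := h24
  refine ⟨fun M => C * ((3 + max M 0) * (1 + 2 ^ (p - 1) * (1 + (max M 0) ^ (p - 1)))),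
    ?_, ?_, ?_⟩
  · -- Monotone
    intro M N hMN
    dsimp only
    have h0 : max M 0 ≤ max N 0 := max_le_max hMN le_rfl
    have h0' : (0:ℝ) ≤ max M 0 := le_max_right _ _
    have h0'' : (0:ℝ) ≤ max N 0 := le_max_right _ _
    have h1 : (max M 0) ^ (p - 1) ≤ (max N 0) ^ (p - 1) :=
      Real.rpow_le_rpow h0' h0 (by linarith)
    have h2 : (0:ℝ) ≤ 2 ^ (p - 1) := Real.rpow_nonneg (by norm_num) _
    have h3 : (0:ℝ) ≤ (max M 0) ^ (p - 1) := Real.rpow_nonneg h0' _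
    have h4 : (0:ℝ) ≤ (max N 0) ^ (p - 1) := Real.rpow_nonneg h0'' _
    have h5 : 2 ^ (p - 1) * (1 + (max M 0) ^ (p - 1)) ≤ 2 ^ (p - 1) * (1 + (max N 0) ^ (p - 1)) :=
      mul_le_mul_of_nonneg_left (by linarith) h2
    have h6 : (0:ℝ) ≤ 2 ^ (p - 1) * (1 + (max M 0) ^ (p - 1)) :=
      mul_nonneg h2 (by linarith)
    apply mul_le_mul_of_nonneg_left _ hC.le
    apply mul_le_mul (by linarith) (by linarith) (by linarith) (by linarith)
  · -- Positivity
    intro M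
    dsimp only
    have h0 : (0:ℝ) ≤ max M 0 := le_max_right _ _
    have h2 : (0:ℝ) ≤ 2 ^ (p - 1) := Real.rpow_nonneg (by norm_num) _
    have h3 : (0:ℝ) ≤ (max M 0) ^ (p - 1) := Real.rpow_nonneg h0 _
    have h6 : (0:ℝ) ≤ 2 ^ (p - 1) * (1 + (max M 0) ^ (p - 1)) := mul_nonneg h2 (by linarith)
    exact mul_pos hC (mul_pos (by linarith) (by linarith))
  · intro x₀ t₀ ρ hρ hρ1 z hz uv b P L hPsym
    have hm0 : (0:ℝ) ≤ ‖b‖ + mnorm L := add_nonneg (norm_nonneg _) (mnorm_nonneg' _)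
    simp only [max_eq_left hm0]
    set m := ‖b‖ + mnorm L with hmdef
    set s := ‖uv - aff x₀ b L z.1‖ with hsdef
    set a := mnorm (P - symPart L) with hadef
    have hz1 : z.1 ∈ ball x₀ ρ := hz.1
    have hz2 : z.2 ∈ Ioo (t₀ - ρ ^ 2) t₀ := hz.2
    have hx : ‖x₀ - z.1‖ ≤ ρ := by
      have h := mem_ball.mp hz1
      rw [← dist_eq_norm, dist_comm]
      exact h.le
    have hxz : ‖z.1 - x₀‖ ≤ ρ := by
      have h := mem_ball.mp hz1
      rw [← dist_eq_norm]
      exact h.le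
    have ht : |t₀ - z.2| ^ ((1:ℝ)/2) ≤ ρ := by
      have h1 : |t₀ - z.2| ≤ ρ ^ 2 := by
        have h2 := hz2.1
        have h3 := hz2.2
        rw [abs_of_nonneg (by linarith)]
        linarith
      calc |t₀ - z.2| ^ ((1:ℝ)/2) ≤ (ρ ^ 2) ^ ((1:ℝ)/2) :=
            Real.rpow_le_rpow (abs_nonneg _) h1 (by norm_num)
        _ = ρ := by
            rw [← Real.rpow_natCast ρ 2, ← Real.rpow_mul hρ.le]
            norm_num
    have hpd : pdist (x₀, t₀) z ≤ 2 * ρ := by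
      show ‖x₀ - z.1‖ + |t₀ - z.2| ^ ((1:ℝ)/2) ≤ 2 * ρ
      linarith
    have hpd0 : (0:ℝ) ≤ pdist (x₀, t₀) z := by
      show (0:ℝ) ≤ ‖x₀ - z.1‖ + |t₀ - z.2| ^ ((1:ℝ)/2)
      have := Real.rpow_nonneg (abs_nonneg (t₀ - z.2)) ((1:ℝ)/2)
      linarith [norm_nonneg (x₀ - z.1)]
    have hbuv : ‖b - uv‖ ≤ s + mnorm L * ρ := by
      have h1 : b - uv = (aff x₀ b L z.1 - uv) - (aff x₀ b L z.1 - b) := by abel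
      have h4 := aff_sub_le x₀ b L z.1
      have h5 : mnorm L * ‖z.1 - x₀‖ ≤ mnorm L * ρ :=
        mul_le_mul_of_nonneg_left hxz (mnorm_nonneg' L)
      calc ‖b - uv‖ = ‖(aff x₀ b L z.1 - uv) - (aff x₀ b L z.1 - b)‖ := by rw [← h1]
        _ ≤ ‖aff x₀ b L z.1 - uv‖ + ‖aff x₀ b L z.1 - b‖ := norm_sub_le _ _
        _ = ‖uv - aff x₀ b L z.1‖ + ‖aff x₀ b L z.1 - b‖ := by rw [norm_sub_rev]
        _ ≤ s + mnorm L * ρ := by rw [← hsdef]; linarith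
    have hmL : mnorm L ≤ m := by
      rw [hmdef]; linarith [norm_nonneg b]
    have hD : pdist (x₀, t₀) z + ‖b - uv‖ ≤ (2 + m) * ρ + s := by
      have h2 : mnorm L * ρ ≤ m * ρ := mul_le_mul_of_nonneg_right hmL hρ.le
      nlinarith
    have hD0 : (0:ℝ) ≤ pdist (x₀, t₀) z + ‖b - uv‖ := by
      linarith [norm_nonneg (b - uv)]
    have hm0' : (0:ℝ) ≤ m := hm0
    constructor
    · have H := h24' (x₀, t₀) z b uv P
      rw [min_eq_left (hK1 _)] at H
      have hPa : mnorm P ≤ a + m := by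
        have h1 := mnorm_tri P (symPart L)
        have h2 := mnorm_symPart_le L
        rw [← hadef] at h1
        linarith
      have hP1 : mnorm P ^ (p - 1) ≤ (a + m) ^ (p - 1) :=
        Real.rpow_le_rpow (mnorm_nonneg' _) hPa (by linarith)
      have hkey := keyA p β ρ s a m (pdist (x₀, t₀) z + ‖b - uv‖) hp hβ0 hβ1 hρ hρ1
        (norm_nonneg _) (mnorm_nonneg' _) hm0' hD0 hD
      have hDβ0 : (0:ℝ) ≤ (pdist (x₀, t₀) z + ‖b - uv‖) ^ β := Real.rpow_nonneg hD0 _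
      calc mnorm (A (x₀, t₀) b P - A z uv P)
          ≤ C * 1 * (pdist (x₀, t₀) z + ‖b - uv‖) ^ β * (1 + mnorm P ^ (p - 1)) := H
        _ = C * ((pdist (x₀, t₀) z + ‖b - uv‖) ^ β * (1 + mnorm P ^ (p - 1))) := by ring
        _ ≤ C * ((pdist (x₀, t₀) z + ‖b - uv‖) ^ β * (1 + (a + m) ^ (p - 1))) := by
            apply mul_le_mul_of_nonneg_left _ hC.le
            apply mul_le_mul_of_nonneg_left (by linarith) hDβ0
        _ ≤ C * ((3 + m) * (1 + 2 ^ (p - 1) * (1 + m ^ (p - 1))) *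
              (ρ ^ β * (1 + a ^ p + (s / ρ) ^ p))) :=
            mul_le_mul_of_nonneg_left hkey hC.le
        _ = C * ((3 + m) * (1 + 2 ^ (p - 1) * (1 + m ^ (p - 1)))) * ρ ^ β *
              (1 + a ^ p + (s / ρ) ^ p) := by ring
    · have H := h24' (x₀, t₀) z b uv (symPart L)
      rw [min_eq_left (hK1 _)] at H
      have hq : mnorm (symPart L) ≤ m := le_trans (mnorm_symPart_le L) hmL
      have hq1 : mnorm (symPart L) ^ (p - 1) ≤ m ^ (p - 1) :=
        Real.rpow_le_rpow (mnorm_nonneg' _) hq (by linarith)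
      have hkey := keyB p β ρ s m (pdist (x₀, t₀) z + ‖b - uv‖) hp hβ0 hβ1 hρ hρ1
        (norm_nonneg _) hm0' hD0 hD
      have hDβ0 : (0:ℝ) ≤ (pdist (x₀, t₀) z + ‖b - uv‖) ^ β := Real.rpow_nonneg hD0 _
      calc mnorm (A (x₀, t₀) b (symPart L) - A z uv (symPart L))
          ≤ C * 1 * (pdist (x₀, t₀) z + ‖b - uv‖) ^ β * (1 + mnorm (symPart L) ^ (p - 1)) := H
        _ = C * ((pdist (x₀, t₀) z + ‖b - uv‖) ^ β * (1 + mnorm (symPart L) ^ (p - 1))) := by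
            ring
        _ ≤ C * ((pdist (x₀, t₀) z + ‖b - uv‖) ^ β * (1 + m ^ (p - 1))) := by
            apply mul_le_mul_of_nonneg_left _ hC.le
            apply mul_le_mul_of_nonneg_left (by linarith) hDβ0
        _ ≤ C * ((3 + m) * (1 + 2 ^ (p - 1) * (1 + m ^ (p - 1))) *
              (ρ ^ β * (1 + (s / ρ) ^ β))) :=
            mul_le_mul_of_nonneg_left hkey hC.le
        _ = C * ((3 + m) * (1 + 2 ^ (p - 1) * (1 + m ^ (p - 1)))) * ρ ^ β *
              (1 + (s / ρ) ^ β) := by ring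


end
end
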